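/- The concretization relation is monotone with respect to the slicing criterion: if P ⊆ Q ⊆ Pos(t), then every concretization of slice(t,Q) is also a concretization of slice(t,P). -/
import Mathlib


open scoped Classical

abbrev Pos := List ℕ

/-- Ground terms over a signature `F` (variadic). -/
inductive GTerm (F : Type) : Type
  | fn : F → List (GTerm F) → GTerm F

/-- Term slices: terms over `F ∪ {•}`. -/
inductive STerm (F : Type) : Type
  | bullet : STerm F
  | fn : F → List (STerm F) → STerm F

/-- Terms with variables over `F`. -/
inductive VTerm (F : Type) : Type
  | var : ℕ → VTerm F
  | fn : F → List (VTerm F) → VTerm F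

variable {F : Type}

def GTerm.subtermAt : Pos → GTerm F → Option (GTerm F)
  | [], t => some t
  | i :: p, .fn _ args => (args[i]?).bind (GTerm.subtermAt p)

def GTerm.isPos (p : Pos) (t : GTerm F) : Prop := (GTerm.subtermAt p t).isSome

def GTerm.rootSym : GTerm F → F
  | .fn f _ => f

def GTerm.rootSymAt (p : Pos) (t : GTerm F) : Option F :=
  (GTerm.subtermAt p t).map GTerm.rootSym

def STerm.subtermAt : Pos → STerm F → Option (STerm F)
  | [], t => some t
  | _ :: _, .bullet => none
  | i :: p, .fn _ args => (args[i]?).bind (STerm.subtermAt p)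

def STerm.rootSym : STerm F → Option F
  | .bullet => none
  | .fn f _ => some f

def STerm.rootSymAt (p : Pos) (t : STerm F) : Option F :=
  (STerm.subtermAt p t).bind STerm.rootSym

/-- Non-`•` positions of a term slice. -/
def STerm.isPos (p : Pos) (t : STerm F) : Prop :=
  ∃ u, STerm.subtermAt p t = some u ∧ u ≠ .bullet

def VTerm.subtermAt : Pos → VTerm F → Option (VTerm F)
  | [], t => some t
  | _ :: _, .var _ => none
  | i :: p, .fn _ args => (args[i]?).bind (VTerm.subtermAt p)

def VTerm.rootSym : VTerm F → Option F
  | .var _ => none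
  | .fn f _ => some f

def VTerm.rootSymAt (p : Pos) (t : VTerm F) : Option F :=
  (VTerm.subtermAt p t).bind VTerm.rootSym

/-- Positions of the redex/contractum pattern: non-variable positions. -/
def VTerm.patPos (p : Pos) (t : VTerm F) : Prop :=
  ∃ f args, VTerm.subtermAt p t = some (.fn f args)

mutual
  def VTerm.subst (σ : ℕ → GTerm F) : VTerm F → GTerm F
    | .var n => σ n
    | .fn f args => .fn f (VTerm.substList σ args)
  def VTerm.substList (σ : ℕ → GTerm F) : List (VTerm F) → List (GTerm F)
    | [] => []
    | a :: as => VTerm.subst σ a :: VTerm.substList σ as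
end

mutual
  def GTerm.replaceAt : GTerm F → Pos → GTerm F → GTerm F
    | _, [], r => r
    | .fn f args, i :: p, r => .fn f (GTerm.replaceAtList args i p r)
  def GTerm.replaceAtList : List (GTerm F) → ℕ → Pos → GTerm F → List (GTerm F)
    | [], _, _, _ => []
    | a :: as, 0, p, r => GTerm.replaceAt a p r :: as
    | a :: as, n + 1, p, r => a :: GTerm.replaceAtList as n p r
end

mutual
  def STerm.replaceAt : STerm F → Pos → STerm F → STerm F
    | _, [], r => r
    | .bullet, _ :: _, _ => .bullet
    | .fn f args, i :: p, r => .fn f (STerm.replaceAtList args i p r)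
  def STerm.replaceAtList : List (STerm F) → ℕ → Pos → STerm F → List (STerm F)
    | [], _, _, _ => []
    | a :: as, 0, p, r => STerm.replaceAt a p r :: as
    | a :: as, n + 1, p, r => a :: STerm.replaceAtList as n p r
end

mutual
  noncomputable def GTerm.slRec (P : Set Pos) : GTerm F → Pos → STerm F
    | .fn f args, p =>
        if ∃ w, (p ++ w) ∈ P then .fn f (GTerm.slRecList P args p 0) else .bullet
  noncomputable def GTerm.slRecList (P : Set Pos) : List (GTerm F) → Pos → ℕ → List (STerm F)
    | [], _, _ => []
    | a :: as, p, i => GTerm.slRec P a (p ++ [i]) :: GTerm.slRecList P as p (i + 1)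
end

/-- `slice(t,P)`. -/
noncomputable def GTerm.slice (t : GTerm F) (P : Set Pos) : STerm F := GTerm.slRec P t []

/-- Concretization: `Conc t• t'` iff replacing the `•`s of `t•` by distinct fresh
variables yields a term more general than `t'`. -/
inductive Conc {F : Type} : STerm F → GTerm F → Prop
  | bullet (t : GTerm F) : Conc .bullet t
  | fn (f : F) (as : List (STerm F)) (bs : List (GTerm F))
      (hlen : as.length = bs.length)
      (h : ∀ (i : ℕ) (a : STerm F) (b : GTerm F),
            as[i]? = some a → bs[i]? = some b → Conc a b) :
      Conc (.fn f as) (.fn f bs)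

/-- Origin positions `◁_μ^L w` of a labeled rewrite step `t0 → t1`. -/
def originSet {α : Type} (t0 t1 : GTerm F) (Ls Lt : Pos → Set α) (w : Pos) : Set Pos :=
  {v | GTerm.isPos v t0 ∧ ∃ p, GTerm.isPos p t1 ∧ p <+: w ∧ Ls v ⊆ Lt p}

/-- A rewrite step with rule `lam → rho` at position `q`. -/
def RewritesAt (lam rho : VTerm F) (q : Pos) (t0 t1 : GTerm F) : Prop :=
  ∃ σ : ℕ → GTerm F, GTerm.subtermAt q t0 = some (VTerm.subst σ lam) ∧
    t1 = GTerm.replaceAt t0 q (VTerm.subst σ rho)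

def leftLinear (lam : VTerm F) : Prop :=
  ∀ n p p', VTerm.subtermAt p lam = some (.var n) →
    VTerm.subtermAt p' lam = some (.var n) → p = p'

def nonCollapsing (rho : VTerm F) : Prop := ∀ n, rho ≠ .var n
theorem slRecList_length {F : Type} (P : Set Pos) :
    ∀ (as : List (GTerm F)) (p : Pos) (i : ℕ),
      (GTerm.slRecList P as p i).length = as.length
  | [], _, _ => by simp [GTerm.slRecList]
  | a :: as, p, i => by
      simp [GTerm.slRecList, slRecList_length P as p (i + 1)]

mutual
theorem conc_mono_aux {F : Type} (P Q : Set Pos) (hPQ : P ⊆ Q) :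
    ∀ (t : GTerm F) (p : Pos) (t' : GTerm F),
      Conc (GTerm.slRec Q t p) t' → Conc (GTerm.slRec P t p) t'
  | .fn f args, p, t', h => by
      by_cases hP : ∃ w, (p ++ w) ∈ P
      · obtain ⟨w, hw⟩ := hP
        have hQc : ∃ w, (p ++ w) ∈ Q := ⟨w, hPQ hw⟩
        rw [GTerm.slRec, if_pos ⟨w, hw⟩]
        rw [GTerm.slRec, if_pos hQc] at h
        cases h with
        | fn _ _ bs hlen hpt =>
          refine Conc.fn f _ bs ?_ ?_
          · rw [slRecList_length] at hlen ⊢; exact hlen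
          · exact conc_mono_auxList P Q hPQ args p 0 bs hpt
      · rw [GTerm.slRec, if_neg hP]; exact Conc.bullet t'
theorem conc_mono_auxList {F : Type} (P Q : Set Pos) (hPQ : P ⊆ Q) :
    ∀ (as : List (GTerm F)) (p : Pos) (i : ℕ) (bs : List (GTerm F)),
      (∀ (j : ℕ) (a : STerm F) (b : GTerm F),
          (GTerm.slRecList Q as p i)[j]? = some a → bs[j]? = some b → Conc a b) →
      ∀ (j : ℕ) (a : STerm F) (b : GTerm F),
          (GTerm.slRecList P as p i)[j]? = some a → bs[j]? = some b → Conc a b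
  | [], p, i, bs, h => by intro j a b ha; simp [GTerm.slRecList] at ha
  | t :: as, p, i, bs, h => by
      intro j a b ha hb
      rw [GTerm.slRecList] at ha
      match j with
      | 0 =>
        simp at ha; subst ha
        exact conc_mono_aux P Q hPQ t (p ++ [i]) b
          (h 0 _ b (by rw [GTerm.slRecList]; simp) hb)
      | j + 1 =>
        simp only [List.getElem?_cons_succ] at ha
        refine conc_mono_auxList P Q hPQ as p (i + 1) bs.tail ?_ j a b ha ?_
        · intro k x y hx hy
          refine h (k + 1) x y ?_ ?_
          · rw [GTerm.slRecList]; simpa using hx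
          · cases bs with
            | nil => simp at hy
            | cons c cs => simpa using hy
        · cases bs with
          | nil => simp at hb
          | cons c cs => simpa using hb
end

theorem conc_monotone_in_criterion {F : Type} (t : GTerm F) (P Q : Set Pos)
    (hPQ : P ⊆ Q) (hQ : ∀ p ∈ Q, GTerm.isPos p t) (t' : GTerm F)
    (h : Conc (GTerm.slice t Q) t') :
    Conc (GTerm.slice t P) t' := by
  exact conc_mono_aux P Q hPQ t [] t' h
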